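/- arXiv:1609.00909 — 3 statements merged into one kernel-verified Lean document; each statement's English description precedes it below -/
import Mathlib

section
/- Let U ⊆ ℤ^d be finite and odd. If U contains an even vertex, then |∂U| ≥ 2d(2d − 1). -/
/-- The nearest-neighbor lattice graph on `ℤ^d`: two vertices are adjacent
iff they differ by one in exactly one coordinate (equivalently, ℓ¹-distance 1). -/
def ZGraph (d : ℕ) : SimpleGraph (Fin d → ℤ) where
  Adj u v := ∑ i, (u i - v i).natAbs = 1
  symm := by
    constructor
    intro u v h
    have e : ∀ i, (v i - u i).natAbs = (u i - v i).natAbs := fun i => by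
      rw [← Int.natAbs_neg, neg_sub]
    simpa only [e] using h
  loopless := by
    constructor
    intro u h
    simp at h

/-- A vertex is odd if its coordinate sum is odd. -/
def OddVert {d : ℕ} (v : Fin d → ℤ) : Prop := Odd (∑ i, v i)

/-- A vertex is even if its coordinate sum is even. -/
def EvenVert {d : ℕ} (v : Fin d → ℤ) : Prop := Even (∑ i, v i)

/-- Internal vertex-boundary of `U`. -/
def intBdry (d : ℕ) (U : Set (Fin d → ℤ)) : Set (Fin d → ℤ) :=
  {u ∈ U | ∃ v, (ZGraph d).Adj u v ∧ v ∉ U}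

/-- External vertex-boundary of `U`. -/
def extBdry (d : ℕ) (U : Set (Fin d → ℤ)) : Set (Fin d → ℤ) :=
  {v | v ∉ U ∧ ∃ u ∈ U, (ZGraph d).Adj u v}

/-- A set is odd if its internal vertex-boundary consists of odd vertices. -/
def IsOddSet (d : ℕ) (U : Set (Fin d → ℤ)) : Prop := ∀ u ∈ intBdry d U, OddVert u

/-- A set is even if its internal vertex-boundary consists of even vertices. -/
def IsEvenSet (d : ℕ) (U : Set (Fin d → ℤ)) : Prop := ∀ u ∈ intBdry d U, EvenVert u

/-- The edge-boundary of `U`: edges with exactly one endpoint in `U`. -/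
def edgeBdry (d : ℕ) (U : Set (Fin d → ℤ)) : Set (Sym2 (Fin d → ℤ)) :=
  {e | ∃ u v, (ZGraph d).Adj u v ∧ u ∈ U ∧ v ∉ U ∧ e = s(u, v)}

/-- A cutset: a non-empty finite subset of `ℤ^d` which is connected and co-connected. -/
def IsCutset (d : ℕ) (U : Set (Fin d → ℤ)) : Prop :=
  U.Finite ∧ U.Nonempty ∧ ((ZGraph d).induce U).Connected ∧ ((ZGraph d).induce Uᶜ).Connected

/-- `OCC d n`: the number of odd cutsets in `ℤ^d` containing the origin with `n` boundary edges. -/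
noncomputable def OCC (d n : ℕ) : ℕ :=
  {S : Set (Fin d → ℤ) | IsCutset d S ∧ IsOddSet d S ∧ (0 : Fin d → ℤ) ∈ S ∧
    (edgeBdry d S).ncard = n}.ncard

/-- A set is regular if both it and its complement have no isolated vertices. -/
def IsRegularSet (d : ℕ) (U : Set (Fin d → ℤ)) : Prop :=
  (∀ u ∈ U, ∃ v ∈ U, (ZGraph d).Adj u v) ∧ (∀ u ∉ U, ∃ v ∉ U, (ZGraph d).Adj u v)

/-- The graph `(ℤ^d)^{⊗r}` where two vertices are adjacent iff their lattice distance is ≤ r. -/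
def PowGraph (d r : ℕ) : SimpleGraph (Fin d → ℤ) where
  Adj u v := u ≠ v ∧ (ZGraph d).dist u v ≤ r
  symm := by
    constructor
    rintro u v ⟨h1, h2⟩
    exact ⟨h1.symm, by rwa [SimpleGraph.dist_comm]⟩
  loopless := by constructor; rintro u ⟨h, -⟩; exact h rfl

/-- An `r`-cutset: a finite regular set, connected and co-connected in `(ℤ^d)^{⊗r}`. -/
def IsRCutset (d r : ℕ) (U : Set (Fin d → ℤ)) : Prop :=
  U.Finite ∧ IsRegularSet d U ∧
    ((PowGraph d r).induce U).Connected ∧ ((PowGraph d r).induce Uᶜ).Connected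

/-- An approximation: a pair of disjoint subsets of `ℤ^d`, the first odd, the second even. -/
structure Approx (d : ℕ) where
  inn : Set (Fin d → ℤ)
  out : Set (Fin d → ℤ)
  disj : Disjoint inn out
  inn_odd : IsOddSet d inn
  out_even : IsEvenSet d out

/-- The set of unknown vertices of an approximation. -/
def Approx.star {d : ℕ} (A : Approx d) : Set (Fin d → ℤ) := (A.inn ∪ A.out)ᶜ

/-- `A` approximates `S` if `A.inn ⊆ S` and `A.out ⊆ Sᶜ`. -/
def Approximates {d : ℕ} (A : Approx d) (S : Set (Fin d → ℤ)) : Prop :=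
  A.inn ⊆ S ∧ A.out ⊆ Sᶜ

/-- A `t`-approximation: the subgraph induced on the unknown vertices has
maximum degree at most `t` and no isolated vertices. -/
def IsTApprox (d t : ℕ) (A : Approx d) : Prop :=
  (∀ v ∈ A.star, ({u ∈ A.star | (ZGraph d).Adj v u}).ncard ≤ t) ∧
  (∀ v ∈ A.star, ∃ u ∈ A.star, (ZGraph d).Adj v u)

/-- The neighborhood `N(U)` of a set. -/
def nbrSet (d : ℕ) (U : Set (Fin d → ℤ)) : Set (Fin d → ℤ) :=
  {v | ∃ u ∈ U, (ZGraph d).Adj v u}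

/-- `U⁺ = U ∪ N(U)`. -/
def plus (d : ℕ) (U : Set (Fin d → ℤ)) : Set (Fin d → ℤ) := U ∪ nbrSet d U

/-- `W` separates `S` if every boundary edge of `S` has an endpoint in `W`. -/
def Separates (d : ℕ) (W S : Set (Fin d → ℤ)) : Prop :=
  ∀ a b : Fin d → ℤ, s(a, b) ∈ edgeBdry d S → a ∈ W ∨ b ∈ W


/-!
Since `U` is odd, the even vertex `u ∈ U` is not on the internal boundary, so all of its `2d`
neighbours `u + e` lie in `U`. From each `u + e`, walk in any of the `2d - 1` directions `f ≠ -e`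
until the walk leaves the finite set `U`; the last step is a boundary edge. These `2d(2d - 1)`
edges are distinct: an edge determines `f` and the line through it, and two distinct neighbours
`u + e`, `u + e'` lie on a common line in direction `f` only when `e' = -e` and `f = ±e`, which is
excluded.
-/

open Finset Function

theorem Set.Finite.exists_add_nsmul_mem_and_add_notMem {G : Type*} [AddCommGroup G]
    [IsAddTorsionFree G] {U : Set G} (hU : U.Finite) {x v : G} (hx : x ∈ U) (hv : v ≠ 0) :
    ∃ m : ℕ, x + m • v ∈ U ∧ x + m • v + v ∉ U := by
  have hinj : Injective fun n : ℕ => x + n • v := fun a b hab => by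
    have : (a : ℤ) • v = (b : ℤ) • v := by simpa [natCast_zsmul] using hab
    exact_mod_cast smul_left_injective ℤ hv this
  by_contra! h
  refine Set.infinite_of_injective_forall_mem hinj (fun n => ?_) hU
  induction n with
  | zero => simpa using hx
  | succ n ih => simpa [succ_nsmul, add_assoc] using h n ih

section

variable {d : ℕ}

-- The `2d` neighbours of a vertex are indexed by signed directions `(i, σ)`, `σ = ±1`.
def unitVec (e : Fin d × ℤˣ) : Fin d → ℤ := Pi.single e.1 (e.2 : ℤ)

lemma unitVec_ne_zero (e : Fin d × ℤˣ) : unitVec e ≠ 0 := by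
  simp [unitVec]

lemma eq_of_unitVec_apply_eq {e e' : Fin d × ℤˣ} (h : unitVec e e.1 = unitVec e' e.1) :
    e = e' := by
  obtain ⟨i, σ⟩ := e
  obtain ⟨i', σ'⟩ := e'
  simp only [unitVec, Pi.single_eq_same, Pi.single_apply] at h
  split_ifs at h with hi
  · simp [hi, Units.ext_iff, h]
  · exact absurd h σ.ne_zero

lemma unitVec_injective : Injective (unitVec (d := d)) :=
  fun _ _ h => eq_of_unitVec_apply_eq (congrFun h _)

lemma eq_of_fst_eq_of_ne_reverse {e f : Fin d × ℤˣ} (h₁ : e.1 = f.1) (h₂ : f ≠ (e.1, -e.2)) :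
    e = f := by
  obtain ⟨i, σ⟩ := e
  obtain ⟨j, τ⟩ := f
  obtain rfl : i = j := h₁
  rcases Int.units_eq_one_or σ with rfl | rfl <;>
    rcases Int.units_eq_one_or τ with rfl | rfl <;> simp_all

lemma eq_of_unitVec_add_nsmul_eq {e e' f : Fin d × ℤˣ} (he : f ≠ (e.1, -e.2))
    (he' : f ≠ (e'.1, -e'.2)) {m m' : ℕ}
    (h : unitVec e + m • unitVec f = unitVec e' + m' • unitVec f) : e = e' := by
  have off_axis : ∀ k ≠ f.1, unitVec e k = unitVec e' k := fun k hk => by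
    simpa [unitVec, Pi.single_apply, hk] using congrFun h k
  by_cases hi : e.1 = f.1
  · by_cases hi' : e'.1 = f.1
    · rw [eq_of_fst_eq_of_ne_reverse hi he, eq_of_fst_eq_of_ne_reverse hi' he']
    · exact (eq_of_unitVec_apply_eq (off_axis e'.1 hi').symm).symm
  · exact eq_of_unitVec_apply_eq (off_axis e.1 hi)

def nonBacktrackingPairs (d : ℕ) : Finset (Σ _ : Fin d × ℤˣ, Fin d × ℤˣ) :=
  univ.sigma fun e => univ.erase (e.1, -e.2)

lemma card_nonBacktrackingPairs (d : ℕ) : #(nonBacktrackingPairs d) = 2 * d * (2 * d - 1) := by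
  simp [nonBacktrackingPairs, card_sigma, card_erase_of_mem, Fintype.card_units_int, mul_comm]

lemma zgraph_adj_add_unitVec (x : Fin d → ℤ) (e : Fin d × ℤˣ) :
    (ZGraph d).Adj x (x + unitVec e) := by
  show ∑ j, (x j - (x j + unitVec e j)).natAbs = 1
  simp only [sub_add_cancel_left, Int.natAbs_neg, unitVec]
  rw [sum_eq_single e.1 (fun j _ hj => by simp [hj]) (by simp)]
  simp

lemma mem_Icc_of_zgraph_adj {u v : Fin d → ℤ} (h : (ZGraph d).Adj u v) :
    v ∈ Set.Icc (u - 1) (u + 1) := by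
  have hle : ∀ i, (u i - v i).natAbs ≤ 1 := fun i =>
    h ▸ single_le_sum (f := fun j => (u j - v j).natAbs) (fun _ _ => Nat.zero_le _) (mem_univ i)
  constructor <;> intro i <;> have := hle i <;>
    simp only [Pi.sub_apply, Pi.add_apply, Pi.one_apply] <;> omega

lemma edgeBdry_finite {U : Set (Fin d → ℤ)} (hU : U.Finite) : (edgeBdry d U).Finite := by
  have hT : (⋃ u ∈ U, Set.Icc (u - 1) (u + 1)).Finite := hU.biUnion fun _ _ => Set.finite_Icc _ _
  refine ((hU.prod hT).image fun p => s(p.1, p.2)).subset ?_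
  rintro _ ⟨u, v, huv, hu, -, rfl⟩
  exact ⟨(u, v), ⟨hu, Set.mem_biUnion hu (mem_Icc_of_zgraph_adj huv)⟩, rfl⟩

lemma IsOddSet.mem_of_adj_of_evenVert {U : Set (Fin d → ℤ)} (hU : IsOddSet d U)
    {u v : Fin d → ℤ} (hu : u ∈ U) (hev : EvenVert u) (huv : (ZGraph d).Adj u v) : v ∈ U := by
  by_contra hv
  exact Int.not_odd_iff_even.mpr hev (hU u ⟨hu, v, huv, hv⟩)

end

/-- A finite odd set containing an even vertex has at least `2d(2d-1)` boundary edges. -/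
theorem odd_set_min_boundary_size (d : ℕ) (U : Set (Fin d → ℤ)) (hUfin : U.Finite)
    (hUodd : IsOddSet d U) (h : ∃ u ∈ U, EvenVert u) :
    2 * d * (2 * d - 1) ≤ (edgeBdry d U).ncard := by
  obtain ⟨u, hu, hev⟩ := h
  have hstep (e : Fin d × ℤˣ) : u + unitVec e ∈ U :=
    hUodd.mem_of_adj_of_evenVert hu hev (zgraph_adj_add_unitVec u e)
  choose m hm_mem hm_notMem using fun p : Σ _ : Fin d × ℤˣ, Fin d × ℤˣ =>
    hUfin.exists_add_nsmul_mem_and_add_notMem (hstep p.1) (unitVec_ne_zero p.2)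
  set exit := fun p : Σ _ : Fin d × ℤˣ, Fin d × ℤˣ => u + unitVec p.1 + m p • unitVec p.2
  rw [← card_nonBacktrackingPairs, ← Set.ncard_coe_finset]
  refine Set.ncard_le_ncard_of_injOn (fun p => s(exit p, exit p + unitVec p.2))
    (fun p _ => ⟨_, _, zgraph_adj_add_unitVec _ _, hm_mem p, hm_notMem p, rfl⟩) ?_
    (edgeBdry_finite hUfin)
  rintro ⟨e, f⟩ hp ⟨e', f'⟩ hq hpq
  simp only [nonBacktrackingPairs, coe_sigma, Set.mem_sigma_iff, coe_univ, Set.mem_univ,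
    coe_erase, Set.mem_sdiff, Set.mem_singleton_iff, true_and] at hp hq
  rcases Sym2.eq_iff.mp hpq with ⟨hin, hout⟩ | ⟨-, hout⟩
  · obtain rfl : f = f' := unitVec_injective (by rw [hin] at hout; exact add_left_cancel hout)
    obtain rfl : e = e' := eq_of_unitVec_add_nsmul_eq hp hq (by simpa [exit, add_assoc] using hin)
    rfl
  · have hmem : exit ⟨e', f'⟩ ∈ U := hm_mem _
    exact absurd (hout ▸ hmem : exit ⟨e, f⟩ + unitVec f ∈ U) (hm_notMem _)
end

section
/- Fix d ≥ 2, an integer 1 ≤ t < 2d and a t-approximation A. For any finite regular odd set S approximated by A, the set D(S) := (Odd ∩ A* ∩ S) ∪ (Even ∩ A* ∩ S^c) satisfies |D(S)| ≤ |∂S| / (2d − t). -/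
/-- `D(S) = (Odd ∩ A* ∩ S) ∪ (Even ∩ A* ∩ Sᶜ)`. -/
def Dmap (d : ℕ) (A : Approx d) (S : Set (Fin d → ℤ)) : Set (Fin d → ℤ) :=
  {v ∈ A.star ∩ S | OddVert v} ∪ {v ∈ A.star ∩ Sᶜ | EvenVert v}

/-!
Every vertex `v` of `D(S)` lies in `A*`, so at least `2d - t` of its `2d` neighbours lie outside
`A*`. Such a neighbour `u` is a boundary vertex of `A•` or of `A∘` and has the parity opposite to
that of `v`. As `A•` is odd and `A∘` is even, `u ∈ A∘ ⊆ Sᶜ` when `v` is odd (so `v ∈ S`), and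
`u ∈ A• ⊆ S` when `v` is even (so `v ∉ S`). Hence every such edge `vu` lies in `∂S`, and it
determines `v` as its endpoint in `A*`, so these edges are distinct for distinct `v`.
-/

theorem sum_natAbs_eq_one_iff {ι : Type*} [Fintype ι] [DecidableEq ι] {w : ι → ℤ} :
    ∑ i, (w i).natAbs = 1 ↔ ∃ (i : ι) (ε : ℤˣ), w = Pi.single i (ε : ℤ) := by
  constructor
  · intro h
    obtain ⟨i, hi⟩ : ∃ i, w i ≠ 0 := by
      by_contra! h0
      simp [h0] at h
    have hrest : ∀ j ∈ Finset.univ.erase i, (w j).natAbs = 0 := by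
      have hsplit := Finset.add_sum_erase _ (fun j => (w j).natAbs) (Finset.mem_univ i)
      have hpos := Int.natAbs_pos.2 hi
      exact Finset.sum_eq_zero_iff.1 (by omega)
    have hwi : (w i).natAbs = 1 := by
      rw [← Finset.add_sum_erase _ _ (Finset.mem_univ i), Finset.sum_eq_zero hrest] at h
      simpa using h
    refine ⟨i, (Int.isUnit_iff_natAbs_eq.2 hwi).unit, funext fun j => ?_⟩
    rcases eq_or_ne j i with rfl | hj
    · simp
    · simpa [hj] using hrest j (Finset.mem_erase.2 ⟨hj, Finset.mem_univ j⟩)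
  · rintro ⟨i, ε, rfl⟩
    rw [Finset.sum_eq_single i (fun j _ hj => by simp [hj]) (by simp)]
    simp

theorem pi_single_units_injective {ι : Type*} [DecidableEq ι] :
    Function.Injective fun p : ι × ℤˣ => Pi.single (M := fun _ => ℤ) p.1 (p.2 : ℤ) := by
  rintro ⟨i, ε⟩ ⟨j, δ⟩ h
  have hi := congrFun h i
  by_cases hij : i = j
  · subst hij
    simpa [Units.ext_iff] using hi
  · simp [hij] at hi

namespace ZGraph

variable {d : ℕ} {u v : Fin d → ℤ}

theorem adj_iff_exists_single :
    (ZGraph d).Adj v u ↔ ∃ (i : Fin d) (ε : ℤˣ), u = v + Pi.single i (ε : ℤ) := by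
  have hsymm : ∀ i, (v i - u i).natAbs = ((u - v) i).natAbs := fun i => by
    rw [Pi.sub_apply, ← Int.natAbs_neg, neg_sub]
  change ∑ i, (v i - u i).natAbs = 1 ↔ _
  simp only [hsymm, sum_natAbs_eq_one_iff, sub_eq_iff_eq_add']

theorem neighborSet_eq_range (v : Fin d → ℤ) :
    (ZGraph d).neighborSet v = Set.range fun p : Fin d × ℤˣ => v + Pi.single p.1 (p.2 : ℤ) := by
  ext u
  simp [adj_iff_exists_single, eq_comm]

theorem neighborSet_finite (v : Fin d → ℤ) : ((ZGraph d).neighborSet v).Finite := by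
  rw [neighborSet_eq_range]
  exact Set.finite_range _

theorem ncard_neighborSet (v : Fin d → ℤ) : ((ZGraph d).neighborSet v).ncard = 2 * d := by
  rw [neighborSet_eq_range, Set.ncard_range_of_injective
    fun p q h => pi_single_units_injective (add_left_cancel h)]
  simp [mul_comm]

theorem oddVert_iff_evenVert_of_adj (h : (ZGraph d).Adj v u) : OddVert u ↔ EvenVert v := by
  obtain ⟨i, ε, rfl⟩ := adj_iff_exists_single.1 h
  rw [OddVert, EvenVert, ← Int.odd_sub]
  simp only [Pi.add_apply, Finset.sum_add_distrib, add_sub_cancel_left, Finset.sum_pi_single',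
    Finset.mem_univ, if_true]
  rcases Int.units_eq_one_or ε with rfl | rfl <;> decide

end ZGraph

theorem mul_ncard_le_ncard_of_pairwiseDisjoint {ι α : Type*} {s : Set ι} {t : Set α}
    {f : ι → Set α} {m : ℕ} (ht : t.Finite) (hm : ∀ i ∈ s, m ≤ (f i).ncard)
    (hft : ∀ i ∈ s, f i ⊆ t) (hf : s.PairwiseDisjoint f) : m * s.ncard ≤ t.ncard := by
  rcases s.finite_or_infinite with hs | hs
  · calc m * s.ncard = ∑ᶠ i ∈ s, m := by rw [finsum_mem_eq_finite_toFinset_sum _ hs,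
          Finset.sum_const, smul_eq_mul, Set.ncard_eq_toFinset_card _ hs, mul_comm]
      _ ≤ ∑ᶠ i ∈ s, (f i).ncard := by
          rw [finsum_mem_eq_finite_toFinset_sum _ hs, finsum_mem_eq_finite_toFinset_sum _ hs]
          exact Finset.sum_le_sum fun i hi => hm i (hs.mem_toFinset.1 hi)
      _ = (⋃ i ∈ s, f i).ncard :=
          (hs.ncard_biUnion (fun i hi => ht.subset (hft i hi)) hf).symm
      _ ≤ t.ncard := Set.ncard_le_ncard (Set.iUnion₂_subset hft) ht
  · simp [hs.ncard]

theorem pairwiseDisjoint_image_mk_diff {α : Type*} (T : Set α) (N : α → Set α) :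
    T.PairwiseDisjoint fun v => (fun u => s(v, u)) '' (N v \ T) := by
  rintro v hv w hw hvw
  refine Set.disjoint_left.2 ?_
  rintro _ ⟨a, ⟨-, ha⟩, rfl⟩ ⟨b, -, heq⟩
  rcases Sym2.eq_iff.1 heq with ⟨rfl, -⟩ | ⟨rfl, -⟩
  exacts [hvw rfl, ha hw]

section Parity

variable {d : ℕ} {U : Set (Fin d → ℤ)} {u v : Fin d → ℤ}

theorem IsOddSet.oddVert_of_adj (hU : IsOddSet d U) (hu : u ∈ U) (hv : v ∉ U)
    (h : (ZGraph d).Adj u v) : OddVert u :=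
  hU u ⟨hu, v, h, hv⟩

theorem IsEvenSet.evenVert_of_adj (hU : IsEvenSet d U) (hu : u ∈ U) (hv : v ∉ U)
    (h : (ZGraph d).Adj u v) : EvenVert u :=
  hU u ⟨hu, v, h, hv⟩

end Parity

namespace Approx

variable {d : ℕ} (A : Approx d) {S : Set (Fin d → ℤ)} {u v : Fin d → ℤ}

theorem mem_out_of_adj_of_oddVert (hv : v ∈ A.star) (hodd : OddVert v)
    (h : (ZGraph d).Adj v u) (hu : u ∉ A.star) : u ∈ A.out := by
  rw [star, Set.notMem_compl_iff] at hu
  refine hu.resolve_left fun hinn => ?_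
  have hu_odd := A.inn_odd.oddVert_of_adj hinn (fun hvinn => hv (.inl hvinn)) h.symm
  exact Int.not_even_iff_odd.2 hodd ((ZGraph.oddVert_iff_evenVert_of_adj h).1 hu_odd)

theorem mem_inn_of_adj_of_evenVert (hv : v ∈ A.star) (heven : EvenVert v)
    (h : (ZGraph d).Adj v u) (hu : u ∉ A.star) : u ∈ A.inn := by
  rw [star, Set.notMem_compl_iff] at hu
  refine hu.resolve_right fun hout => ?_
  have hu_even := A.out_even.evenVert_of_adj hout (fun hvout => hv (.inr hvout)) h.symm
  exact Int.not_even_iff_odd.2 ((ZGraph.oddVert_iff_evenVert_of_adj h).2 heven) hu_even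

theorem Dmap_subset_star : Dmap d A S ⊆ A.star := by
  rintro v (⟨⟨hv, -⟩, -⟩ | ⟨⟨hv, -⟩, -⟩) <;> exact hv

theorem mk_mem_edgeBdry_of_mem_Dmap (hAS : Approximates A S) (hv : v ∈ Dmap d A S)
    (h : (ZGraph d).Adj v u) (hu : u ∉ A.star) : s(v, u) ∈ edgeBdry d S := by
  rcases hv with ⟨⟨hv, hvS⟩, hodd⟩ | ⟨⟨hv, hvS⟩, heven⟩
  · exact ⟨v, u, h, hvS, hAS.2 (A.mem_out_of_adj_of_oddVert hv hodd h hu), rfl⟩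
  · exact ⟨u, v, h.symm, hAS.1 (A.mem_inn_of_adj_of_evenVert hv heven h hu), hvS, Sym2.eq_swap⟩

end Approx

theorem IsTApprox.le_ncard_neighborSet_diff_star {d t : ℕ} {A : Approx d} {v : Fin d → ℤ}
    (hA : IsTApprox d t A) (hv : v ∈ A.star) :
    2 * d - t ≤ ((ZGraph d).neighborSet v \ A.star).ncard := by
  have hsplit := Set.ncard_inter_add_ncard_sdiff_eq_ncard ((ZGraph d).neighborSet v) A.star
    (ZGraph.neighborSet_finite v)
  have hinter : (ZGraph d).neighborSet v ∩ A.star = {u ∈ A.star | (ZGraph d).Adj v u} := by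
    ext u
    simp [and_comm]
  rw [hinter, ZGraph.ncard_neighborSet] at hsplit
  have hdeg := hA.1 v hv
  omega

theorem edgeBdry_finite_s9 {d : ℕ} {S : Set (Fin d → ℤ)} (hS : S.Finite) :
    (edgeBdry d S).Finite := by
  refine (hS.biUnion fun v _ => (ZGraph.neighborSet_finite v).image fun u => s(v, u)).subset ?_
  rintro _ ⟨u, v, h, hu, -, rfl⟩
  exact Set.mem_biUnion hu ⟨v, h, rfl⟩

theorem Dmap_card_bound_general (d t : ℕ)
    (A : Approx d) (hA : IsTApprox d t A) (S : Set (Fin d → ℤ)) (hSfin : S.Finite)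
    (hAS : Approximates A S) :
    (2 * d - t) * (Dmap d A S).ncard ≤ (edgeBdry d S).ncard := by
  refine mul_ncard_le_ncard_of_pairwiseDisjoint (edgeBdry_finite_s9 hSfin) (fun v hv => ?_) ?_
    ((pairwiseDisjoint_image_mk_diff A.star (ZGraph d).neighborSet).subset A.Dmap_subset_star)
  · rw [Set.ncard_image_of_injective _ fun _ _ => Sym2.congr_right.1]
    exact IsTApprox.le_ncard_neighborSet_diff_star hA (A.Dmap_subset_star hv)
  · rintro v hv _ ⟨u, ⟨h, hu⟩, rfl⟩
    exact A.mk_mem_edgeBdry_of_mem_Dmap hAS hv h hu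

/-- For a finite regular odd set `S` approximated by a `t`-approximation `A`,
`|D(S)| ≤ |∂S| / (2d - t)`. -/
theorem Dmap_card_bound (d t : ℕ) (hd : 2 ≤ d) (ht1 : 1 ≤ t) (ht2 : t < 2 * d)
    (A : Approx d) (hA : IsTApprox d t A) (S : Set (Fin d → ℤ)) (hSfin : S.Finite)
    (hSreg : IsRegularSet d S) (hSodd : IsOddSet d S) (hAS : Approximates A S) :
    (2 * d - t) * (Dmap d A S).ncard ≤ (edgeBdry d S).ncard :=
  Dmap_card_bound_general d t A hA S hSfin hAS
end

section
/- Let d ≥ 2 and let S ⊆ ℤ^d be an odd set. Then the set of revealed vertices S^rev := {v ∈ ℤ^d : |∂v ∩ ∂S| ≥ d} separates S, i.e., every edge of ∂S has at least one endpoint in S^rev. (Here ∂v denotes the set of 2d edges of ℤ^d incident to the vertex v.) -/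
def unitStep {d : ℕ} (p : Fin d × ℤˣ) : Fin d → ℤ := Pi.single p.1 (p.2 : ℤ)

lemma unitStep_ne_zero {d : ℕ} (p : Fin d × ℤˣ) : unitStep p ≠ 0 :=
  fun h => p.2.ne_zero (by simpa [unitStep] using congrFun h p.1)

lemma unitStep_injective {d : ℕ} : Function.Injective (unitStep (d := d)) := by
  rintro ⟨i, ε⟩ ⟨j, η⟩ h
  obtain rfl : i = j := by
    by_contra hij
    simpa [unitStep, Pi.single_apply, hij] using congrFun h i
  simpa [unitStep, Units.val_inj] using Pi.single_injective i h

lemma card_directions (d : ℕ) : Nat.card (Fin d × ℤˣ) = 2 * d := by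
  rw [Nat.card_eq_fintype_card, Fintype.card_prod, Fintype.card_fin,
    show Fintype.card ℤˣ = 2 by decide, mul_comm]

lemma odd_sum_unitStep {d : ℕ} (p : Fin d × ℤˣ) : Odd (∑ i, unitStep p i) := by
  rcases Int.units_eq_one_or p.2 with h | h <;> simp [unitStep, h]

namespace ZGraph

variable {d : ℕ}

lemma adj_add_right {u v : Fin d → ℤ} (h : (ZGraph d).Adj u v) (w : Fin d → ℤ) :
    (ZGraph d).Adj (u + w) (v + w) := by
  simpa [ZGraph] using h

lemma adj_add_unitStep (u : Fin d → ℤ) (p : Fin d × ℤˣ) :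
    (ZGraph d).Adj u (u + unitStep p) := by
  show ∑ i, (u i - (u + unitStep p) i).natAbs = 1
  rw [Finset.sum_eq_single p.1]
  · simp [unitStep]
  · intro i _ hi
    simp [unitStep, hi]
  · simp

lemma natAbs_sub_le_one {u v : Fin d → ℤ} (h : (ZGraph d).Adj u v) (i : Fin d) :
    (u i - v i).natAbs ≤ 1 :=
  h ▸ Finset.single_le_sum (f := fun j => (u j - v j).natAbs) (fun _ _ => Nat.zero_le _)
    (Finset.mem_univ i)

lemma finite_neighborSet (u : Fin d → ℤ) : ((ZGraph d).neighborSet u).Finite := by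
  refine (Set.finite_Icc (u - 1) (u + 1)).subset fun v hv => ⟨fun i => ?_, fun i => ?_⟩ <;>
  · have := natAbs_sub_le_one hv i
    simp only [Pi.sub_apply, Pi.add_apply, Pi.one_apply]
    omega

lemma finite_incidenceSet (u : Fin d → ℤ) : ((ZGraph d).incidenceSet u).Finite := by
  classical
  have := (finite_neighborSet u).to_subtype
  exact Set.finite_coe_iff.mp (Finite.of_equiv _ ((ZGraph d).incidenceSetEquivNeighborSet u).symm)

end ZGraph

lemma IsOddSet.mem_of_adj {d : ℕ} {S : Set (Fin d → ℤ)} (hS : IsOddSet d S) {x y : Fin d → ℤ}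
    (hx : x ∈ S) (hxy : (ZGraph d).Adj x y) (heven : EvenVert x) : y ∈ S := by
  by_contra hy
  exact Int.not_even_iff_odd.mpr (hS x ⟨hx, y, hxy, hy⟩) heven

lemma ncard_le_ncard_incidenceSet_inter_edgeBdry {d : ℕ} (S : Set (Fin d → ℤ))
    (w : Fin d → ℤ) {T : Set (Fin d × ℤˣ)} (hT : ∀ p ∈ T, s(w, w + unitStep p) ∈ edgeBdry d S) :
    T.ncard ≤ ((ZGraph d).incidenceSet w ∩ edgeBdry d S).ncard := by
  refine Set.ncard_le_ncard_of_injOn (fun p => s(w, w + unitStep p))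
    (fun p hp => ⟨⟨ZGraph.adj_add_unitStep w p, Sym2.mem_mk_left _ _⟩, hT p hp⟩) ?_
    ((ZGraph.finite_incidenceSet w).inter_of_left _)
  intro p _ q _ h
  rcases Sym2.eq_iff.mp h with ⟨-, h⟩ | ⟨h, -⟩
  · exact unitStep_injective (add_left_cancel h)
  · exact absurd (left_eq_add.mp h) (unitStep_ne_zero q)

lemma revealed_of_mem_edgeBdry {d : ℕ} {S : Set (Fin d → ℤ)} (hS : IsOddSet d S)
    {u v : Fin d → ℤ} (huv : (ZGraph d).Adj u v) (hu : u ∈ S) (hv : v ∉ S) :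
    d ≤ ((ZGraph d).incidenceSet u ∩ edgeBdry d S).ncard ∨
      d ≤ ((ZGraph d).incidenceSet v ∩ edgeBdry d S).ncard := by
  set Tu := {p | u + unitStep p ∉ S}
  set Tv := {p | v + unitStep p ∈ S}
  -- Each of the `2d` directions `p` yields a boundary edge at `u` or at `v`: `u` is odd, so
  -- `u + unitStep p` is even and, if it lies in `S`, so does its neighbour `v + unitStep p`.
  have hcover : Tu ∪ Tv = Set.univ := by
    refine Set.eq_univ_of_forall fun p => or_iff_not_imp_left.mpr fun hp => ?_
    refine hS.mem_of_adj (not_not.mp hp) (ZGraph.adj_add_right huv _) ?_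
    have := (hS u ⟨hu, v, huv, hv⟩).add_odd (odd_sum_unitStep p)
    simpa [EvenVert, Finset.sum_add_distrib] using this
  have hTu : Tu.ncard ≤ ((ZGraph d).incidenceSet u ∩ edgeBdry d S).ncard :=
    ncard_le_ncard_incidenceSet_inter_edgeBdry S u fun p hp =>
      ⟨u, _, ZGraph.adj_add_unitStep u p, hu, hp, rfl⟩
  have hTv : Tv.ncard ≤ ((ZGraph d).incidenceSet v ∩ edgeBdry d S).ncard :=
    ncard_le_ncard_incidenceSet_inter_edgeBdry S v fun p hp =>
      ⟨_, v, (ZGraph.adj_add_unitStep v p).symm, hp, hv, Sym2.eq_swap⟩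
  have : 2 * d ≤ Tu.ncard + Tv.ncard := by
    rw [← card_directions, ← Set.ncard_univ, ← hcover]
    exact Set.ncard_union_le Tu Tv
  omega

theorem revealed_vertices_separate_general (d : ℕ) (S : Set (Fin d → ℤ))
    (hS : IsOddSet d S) :
    Separates d {v : Fin d → ℤ | d ≤ ((ZGraph d).incidenceSet v ∩ edgeBdry d S).ncard} S := by
  rintro a b ⟨u, v, huv, hu, hv, he⟩
  rcases Sym2.eq_iff.mp he with ⟨rfl, rfl⟩ | ⟨rfl, rfl⟩
  · exact revealed_of_mem_edgeBdry hS huv hu hv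
  · exact (revealed_of_mem_edgeBdry hS huv hu hv).symm

/-- For an odd set `S`, the set of revealed vertices
`S^rev = {v : |∂v ∩ ∂S| ≥ d}` separates `S`. -/
theorem revealed_vertices_separate (d : ℕ) (hd : 2 ≤ d) (S : Set (Fin d → ℤ))
    (hS : IsOddSet d S) :
    Separates d {v : Fin d → ℤ | d ≤ ((ZGraph d).incidenceSet v ∩ edgeBdry d S).ncard} S :=
  revealed_vertices_separate_general d S hS
end
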